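/- arXiv:2410.00216 — 3 statements merged into one kernel-verified Lean document; each statement's English description precedes it below -/
import Mathlib

section
/- In any Gauss diagram (a set of n chords with distinct endpoints on an oriented circle, each chord oriented from a tail to a head), the sum over all chords e of the index n(e) taken mod 2 equals 0; more precisely, the number of chords with odd index is even. -/
open Finset

/-- A Gauss diagram: `n` oriented chords with `2n` pairwise distinct endpoints
on the oriented circle, modelled as `ZMod (2*n)` with its cyclic order. -/
structure GaussDiagram (n : ℕ) where
  tail : Fin n → ZMod (2 * n)
  head : Fin n → ZMod (2 * n)
  distinct : Function.Injective (Sum.elim tail head)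

/-- `x` lies in the open arc from `a` to `b` (in the circle's orientation). -/
def inArc {n : ℕ} (a b x : ZMod (2 * n)) : Prop :=
  0 < (x - a).val ∧ (x - a).val < (b - a).val

instance {n : ℕ} (a b x : ZMod (2 * n)) : Decidable (inArc a b x) := by
  unfold inArc; infer_instance

/-- The index `n(e)` of a chord: tails minus heads in the open arc `e⁺`
from the tail of `e` to the head of `e`. -/
def chordIndex {n : ℕ} (D : GaussDiagram n) (e : Fin n) : ℤ :=
  ((univ.filter fun f => inArc (D.tail e) (D.head e) (D.tail f)).card : ℤ) -
  ((univ.filter fun f => inArc (D.tail e) (D.head e) (D.head f)).card : ℤ)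

/-! Modulo 2 the tails and heads in `e⁺` count alike, so `n(e)` has the parity of the number of
endpoints strictly inside `e⁺`, namely `(head e - tail e) - 1`; with positions in `ZMod (2n)`
read as `0, …, 2n - 1`, this is `head e + tail e + 1` mod 2, since `2n` is even. Summing over
the chords, every position occurs exactly once as an endpoint, so the total is
`(0 + 1 + ⋯ + (2n - 1)) + n ≡ n + n ≡ 0`. -/

theorem Int.even_sum_iff_even_card_odd {ι : Type*} {s : Finset ι} (f : ι → ℤ) :
    Even (∑ i ∈ s, f i) ↔ Even #{x ∈ s | Odd (f x)} := by
  have hcast (m : ℤ) : (m : ZMod 2) = if Odd m then 1 else 0 := by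
    split_ifs with h
    · exact ZMod.intCast_eq_one_iff_odd.mpr h
    · exact ZMod.intCast_eq_zero_iff_even.mpr (Int.not_odd_iff_even.mp h)
  rw [← ZMod.intCast_eq_zero_iff_even, ← ZMod.natCast_eq_zero_iff_even, Int.cast_sum,
    sum_congr rfl fun i _ => hcast (f i), sum_boole]

theorem sum_range_two_mul_natCast_zmod_two (n : ℕ) :
    ∑ k ∈ range (2 * n), (k : ZMod 2) = n := by
  induction n with
  | zero => simp
  | succ m ih =>
    rw [mul_add, mul_one, sum_range_succ, sum_range_succ, ih]
    push_cast
    ring_nf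
    reduce_mod_char

theorem ZMod.sum_natCast_val {m : ℕ} [NeZero m] {R : Type*} [AddCommMonoidWithOne R] :
    ∑ x : ZMod m, (x.val : R) = ∑ k ∈ range m, (k : R) := by
  rw [← sum_image (g := ZMod.val) fun x _ y _ h => ZMod.val_injective _ h]
  congr
  ext k
  simp only [mem_image, mem_univ, true_and, mem_range]
  exact ⟨fun ⟨x, hx⟩ => hx ▸ ZMod.val_lt x, fun hk => ⟨k, ZMod.val_cast_of_lt hk⟩⟩

theorem card_filter_inArc {n : ℕ} [NeZero (2 * n)] (a b : ZMod (2 * n)) :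
    #{x | inArc a b x} = (b - a).val - 1 := by
  rw [← Nat.sub_zero (b - a).val, ← Nat.card_Ioo]
  have hlt {k : ℕ} (hk : k ∈ Ioo 0 (b - a).val) : k < 2 * n :=
    (mem_Ioo.mp hk).2.trans (ZMod.val_lt _)
  refine card_nbij' (fun x => (x - a).val) (fun k => (k : ZMod (2 * n)) + a) ?_ ?_ ?_ ?_
  · intro x hx
    simpa [inArc] using hx
  · intro k hk
    rw [mem_coe, mem_filter]
    refine ⟨mem_univ _, ?_⟩
    simpa only [inArc, add_sub_cancel_right, ZMod.val_cast_of_lt (hlt hk)] using mem_Ioo.mp hk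
  · intro x _
    simp
  · intro k hk
    simp [ZMod.val_cast_of_lt (hlt hk)]

namespace GaussDiagram

variable {n : ℕ} (D : GaussDiagram n)

theorem endpoints_bijective [NeZero (2 * n)] : Function.Bijective (Sum.elim D.tail D.head) := by
  rw [Fintype.bijective_iff_injective_and_card]
  exact ⟨D.distinct, by simp [ZMod.card, two_mul]⟩

theorem sum_tail_add_sum_head [NeZero (2 * n)] {M : Type*} [AddCommMonoid M]
    (g : ZMod (2 * n) → M) : ∑ e, g (D.tail e) + ∑ e, g (D.head e) = ∑ x, g x := by
  simpa only [Fintype.sum_sum_type, Sum.elim_inl, Sum.elim_inr] using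
    D.endpoints_bijective.sum_comp g

theorem chordIndex_cast_zmod_two [NeZero (2 * n)] (e : Fin n) :
    (chordIndex D e : ZMod 2) = (D.tail e).val + (D.head e).val + 1 := by
  have hcount := D.sum_tail_add_sum_head fun x => if inArc (D.tail e) (D.head e) x then 1 else 0
  simp only [← card_filter, card_filter_inArc] at hcount
  have hpos : 0 < (D.head e - D.tail e).val := by
    rw [ZMod.val_pos, sub_ne_zero]
    exact fun h => Sum.inl_ne_inr (D.distinct (h.symm : D.tail e = D.head e))
  have hval : ((D.head e - D.tail e).val : ZMod 2) = (D.head e).val - (D.tail e).val := by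
    simp only [← ZMod.cast_eq_val, ZMod.cast_sub (dvd_mul_right 2 n)]
  rw [chordIndex, Int.cast_sub, Int.cast_natCast, Int.cast_natCast, CharTwo.sub_eq_add,
    ← Nat.cast_add, hcount, Nat.cast_pred hpos, hval]
  simp only [CharTwo.sub_eq_add]
  ring

theorem even_sum_chordIndex : Even (∑ e, chordIndex D e) := by
  rcases Nat.eq_zero_or_pos n with rfl | hn
  · simp
  have : NeZero (2 * n) := ⟨by omega⟩
  rw [← ZMod.intCast_eq_zero_iff_even, Int.cast_sum]
  simp only [chordIndex_cast_zmod_two, sum_add_distrib,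
    D.sum_tail_add_sum_head fun x => (x.val : ZMod 2), ZMod.sum_natCast_val,
    sum_range_two_mul_natCast_zmod_two, sum_const, card_univ, Fintype.card_fin, nsmul_one]
  exact CharTwo.add_self_eq_zero _

end GaussDiagram

open scoped Classical in
/-- the sum of all chord indices is 0 mod 2; more precisely, the
number of chords of odd index is even. -/
theorem stmt2 (n : ℕ) (D : GaussDiagram n) :
    (∑ e, chordIndex D e) % 2 = 0 ∧
      Even (univ.filter fun e => Odd (chordIndex D e)).card := by
  have h := D.even_sum_chordIndex
  exact ⟨Int.even_iff.mp h, (Int.even_sum_iff_even_card_odd _).mp h⟩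
end

section
/- If every chord of a Gauss diagram D has even index, and D' is obtained from D by reversing the orientation of one chord, then every chord of D' has even index. Hence checkerboard colorability (all chord indices even) is preserved under free-equivalence of Gauss diagrams. -/
open Finset

/-- `D'` is obtained from `D` by reversing the orientation of the single chord `e`. -/
def ReverseAt {n : ℕ} (D D' : GaussDiagram n) (e : Fin n) : Prop :=
  D'.tail e = D.head e ∧ D'.head e = D.tail e ∧
    ∀ f : Fin n, f ≠ e → D'.tail f = D.tail f ∧ D'.head f = D.head f

/-!
The `2n` endpoints of a Gauss diagram on `ZMod (2 * n)` occupy every point of the circle, so the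
open arc from the tail of a chord to its head contains exactly `(head - tail).val - 1` endpoints.
Modulo 2 the index counts these endpoints, hence a chord has even index iff `(head - tail).val` is
odd. Reversing a chord replaces this length `v` by `2n - v`, of the same parity, and leaves the
arcs of all other chords unchanged.
-/

lemma card_inArc {n : ℕ} [NeZero n] (a b : ZMod (2 * n)) :
    #{x | inArc a b x} = (b - a).val - 1 := by
  rw [show (b - a).val - 1 = #(Ioo 0 (b - a).val) by simp]
  refine card_nbij' (fun x => (x - a).val) (fun i => a + i) ?_ ?_ ?_ ?_
  · intro x hx
    simpa [inArc] using hx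
  · intro i hi
    have hi' : i < 2 * n := (mem_Ioo.1 hi).2.trans (ZMod.val_lt _)
    refine mem_coe.2 (mem_filter.2 ⟨mem_univ _, ?_⟩)
    simpa only [inArc, add_sub_cancel_left, ZMod.val_cast_of_lt hi'] using mem_Ioo.1 hi
  · intro x _
    simp
  · intro i hi
    have hi' : i < 2 * n := (mem_Ioo.1 hi).2.trans (ZMod.val_lt _)
    simp [ZMod.val_cast_of_lt hi']

lemma odd_val_neg_iff {n : ℕ} [NeZero n] (x : ZMod (2 * n)) : Odd (-x).val ↔ Odd x.val := by
  rw [ZMod.neg_val]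
  split_ifs with hx
  · simp [hx]
  · rw [Nat.odd_sub' x.val_lt.le]
    simp

namespace GaussDiagram

variable {n : ℕ} (D : GaussDiagram n)

lemma bijective_endpoints [NeZero n] : Function.Bijective (Sum.elim D.tail D.head) :=
  (Fintype.bijective_iff_injective_and_card _).2 ⟨D.distinct, by simp [two_mul]⟩

lemma tail_ne_head (e f : Fin n) : D.tail e ≠ D.head f :=
  fun h => Sum.inl_ne_inr (D.distinct h)

lemma card_tail_inArc_add_card_head_inArc [NeZero n] (a b : ZMod (2 * n)) :
    #{f | inArc a b (D.tail f)} + #{f | inArc a b (D.head f)} = (b - a).val - 1 := by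
  rw [← card_inArc, card_filter, card_filter, card_filter]
  symm
  rw [← Fintype.sum_bijective _ D.bijective_endpoints _ _ fun _ => rfl, Fintype.sum_sum_type]
  rfl

lemma even_chordIndex_iff (e : Fin n) :
    Even (chordIndex D e) ↔ Odd (D.head e - D.tail e).val := by
  have : NeZero n := ⟨e.pos.ne'⟩
  have hpos : 1 ≤ (D.head e - D.tail e).val :=
    Nat.one_le_iff_ne_zero.2 (by simpa [sub_eq_zero] using (D.tail_ne_head e e).symm)
  rw [chordIndex, Int.even_sub, Int.even_coe_nat, Int.even_coe_nat, ← Nat.even_add,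
    card_tail_inArc_add_card_head_inArc, Nat.even_sub' hpos]
  simp

end GaussDiagram

/-- if every chord of `D` has even index and `D'` is obtained from
`D` by reversing one chord, then every chord of `D'` has even index
(checkerboard colorability is preserved under free-equivalence). -/
theorem stmt4 (n : ℕ) (D D' : GaussDiagram n) (e : Fin n)
    (hrev : ReverseAt D D' e)
    (heven : ∀ f : Fin n, Even (chordIndex D f)) :
    ∀ f : Fin n, Even (chordIndex D' f) := by
  have : NeZero n := ⟨e.pos.ne'⟩
  obtain ⟨htail, hhead, hother⟩ := hrev
  intro f
  rw [D'.even_chordIndex_iff]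
  by_cases hf : f = e
  · subst hf
    rw [htail, hhead, ← neg_sub, odd_val_neg_iff, ← D.even_chordIndex_iff]
    exact heven f
  · obtain ⟨htail', hhead'⟩ := hother f hf
    rw [htail', hhead', ← D.even_chordIndex_iff]
    exact heven f
end

section
/- Let D be a flat knot diagram on a closed surface Σ, and for each state S of the skein resolution let k(S) = dim ker(i_* : H₁(S; ℤ/2) → H₁(Σ; ℤ/2)) and r(S) = dim im(i_*). If the ℤ/2-homology class of the diagram's underlying curve is zero in H₁(Σ; ℤ/2), then k(S) ≥ 1 for every state S; if the class is nonzero, then r(S) ≥ 1 for every state S. Consequently, in the first case 2 divides J_D(z) = (−1)^{cr(D)} Σ_S (−2)^{k(S)} z^{r(S)}, and in the second case z divides J_D(z). -/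
/-!
The loop classes of a state sum to the class `ω` of the curve. If `ω = 0`, taking every
coefficient equal to `1` gives a nontrivial linear relation among the (at least one) loop
classes, so their span has rank smaller than the number of loops. If `ω ≠ 0`, the span contains
`ω` and so is nonzero. Every summand of `J_D` then carries a factor `-2`, respectively `z`.
-/

open Finset Module Submodule

section SpanRank

variable {K V ι : Type*} [Field K] [AddCommGroup V] [Module K V] [Fintype ι] {v : ι → V}

theorem finrank_span_range_lt_card_of_sum_eq_zero [Nonempty ι] (hv : ∑ i, v i = 0) :
    finrank K (span K (Set.range v)) < Fintype.card ι := by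
  have hdep : ¬LinearIndependent K v :=
    Fintype.not_linearIndependent_iff.mpr
      ⟨fun _ => 1, by simpa using hv, Classical.arbitrary ι, one_ne_zero⟩
  rw [linearIndependent_iff_card_eq_finrank_span] at hdep
  exact lt_of_le_of_ne (finrank_range_le_card v) (Ne.symm hdep)

theorem one_le_finrank_span_range_of_sum_ne_zero (hv : ∑ i, v i ≠ 0) :
    1 ≤ finrank K (span K (Set.range v)) := by
  have := FiniteDimensional.span_of_finite K (Set.finite_range v)
  rw [one_le_finrank_iff]
  intro hbot
  have hmem : ∑ i, v i ∈ span K (Set.range v) := sum_mem fun i _ => subset_span ⟨i, rfl⟩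
  rw [hbot, mem_bot] at hmem
  exact hv hmem

end SpanRank

theorem stmt10_general (n : ℕ) (V : Type*) [AddCommGroup V] [Module (ZMod 2) V]
    (L : (Fin n → Bool) → ℕ) (hL : ∀ S, 1 ≤ L S)
    (c : (S : Fin n → Bool) → Fin (L S) → V) (ω : V)
    (hsum : ∀ S, ∑ i, c S i = ω) :
    (ω = 0 →
      (∀ S, 1 ≤ L S - Module.finrank (ZMod 2)
        (Submodule.span (ZMod 2) (Set.range (c S)))) ∧
      (2 : Polynomial ℤ) ∣ (-1 : Polynomial ℤ) ^ n *
        ∑ S : Fin n → Bool, (-2 : Polynomial ℤ) ^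
            (L S - Module.finrank (ZMod 2) (Submodule.span (ZMod 2) (Set.range (c S)))) *
          Polynomial.X ^ Module.finrank (ZMod 2) (Submodule.span (ZMod 2) (Set.range (c S)))) ∧
    (ω ≠ 0 →
      (∀ S, 1 ≤ Module.finrank (ZMod 2) (Submodule.span (ZMod 2) (Set.range (c S)))) ∧
      Polynomial.X ∣ (-1 : Polynomial ℤ) ^ n *
        ∑ S : Fin n → Bool, (-2 : Polynomial ℤ) ^
            (L S - Module.finrank (ZMod 2) (Submodule.span (ZMod 2) (Set.range (c S)))) *
          Polynomial.X ^ Module.finrank (ZMod 2) (Submodule.span (ZMod 2) (Set.range (c S)))) := by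
  have hkernel : ω = 0 → ∀ S, 1 ≤ L S - finrank (ZMod 2) (span (ZMod 2) (Set.range (c S))) :=
    fun hω S => by
      have : Nonempty (Fin (L S)) := ⟨⟨0, hL S⟩⟩
      have := finrank_span_range_lt_card_of_sum_eq_zero (K := ZMod 2) ((hsum S).trans hω)
      rw [Fintype.card_fin] at this
      omega
  have himage : ω ≠ 0 → ∀ S, 1 ≤ finrank (ZMod 2) (span (ZMod 2) (Set.range (c S))) :=
    fun hω S => one_le_finrank_span_range_of_sum_ne_zero ((hsum S).trans_ne hω)
  refine ⟨fun hω => ⟨hkernel hω, ?_⟩, fun hω => ⟨himage hω, ?_⟩⟩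
  · refine dvd_mul_of_dvd_right (dvd_sum fun S _ => dvd_mul_of_dvd_left ?_ _) _
    exact dvd_pow (dvd_neg.mpr dvd_rfl) (by have := hkernel hω S; omega)
  · refine dvd_mul_of_dvd_right (dvd_sum fun S _ => dvd_mul_of_dvd_right ?_ _) _
    exact dvd_pow dvd_rfl (by have := himage hω S; omega)

/-- abstract form of the divisibility of the flat Jones–Krushkal
polynomial.  States are the `2^n` smoothings; state `S` consists of `L S` loops
with `ℤ/2`-homology classes `c S i` in `V = H₁(Σ; ℤ/2)`, summing to the class
`ω` of the diagram's curve.  With `r S` the rank of the image (span of the loop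
classes) and `k S = L S − r S` the kernel dimension: if `ω = 0` then `k S ≥ 1`
for all states and `2 ∣ J_D`, while if `ω ≠ 0` then `r S ≥ 1` for all states
and `z ∣ J_D`, where `J_D = (−1)^n ∑_S (−2)^{k S} z^{r S}`. -/
theorem stmt10 (n : ℕ) (V : Type*) [AddCommGroup V] [Module (ZMod 2) V]
    [FiniteDimensional (ZMod 2) V]
    (L : (Fin n → Bool) → ℕ) (hL : ∀ S, 1 ≤ L S)
    (c : (S : Fin n → Bool) → Fin (L S) → V) (ω : V)
    (hsum : ∀ S, ∑ i, c S i = ω) :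
    (ω = 0 →
      (∀ S, 1 ≤ L S - Module.finrank (ZMod 2)
        (Submodule.span (ZMod 2) (Set.range (c S)))) ∧
      (2 : Polynomial ℤ) ∣ (-1 : Polynomial ℤ) ^ n *
        ∑ S : Fin n → Bool, (-2 : Polynomial ℤ) ^
            (L S - Module.finrank (ZMod 2) (Submodule.span (ZMod 2) (Set.range (c S)))) *
          Polynomial.X ^ Module.finrank (ZMod 2) (Submodule.span (ZMod 2) (Set.range (c S)))) ∧
    (ω ≠ 0 →
      (∀ S, 1 ≤ Module.finrank (ZMod 2) (Submodule.span (ZMod 2) (Set.range (c S)))) ∧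
      Polynomial.X ∣ (-1 : Polynomial ℤ) ^ n *
        ∑ S : Fin n → Bool, (-2 : Polynomial ℤ) ^
            (L S - Module.finrank (ZMod 2) (Submodule.span (ZMod 2) (Set.range (c S)))) *
          Polynomial.X ^ Module.finrank (ZMod 2) (Submodule.span (ZMod 2) (Set.range (c S)))) :=
  stmt10_general n V L hL c ω hsum
end
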